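/- For every $z \in \mathbb{C}^4$, $\frac{1}{\sqrt{2}} \|z\|_1 \le \|z\|_{\mathsf{X}} \le \|z\|_1$, where $\|z\|_1 = \sum_{i=1}^4 |z_i|$. -/

import Mathlib

/-!
For `x = a e^{iσ}` and `y = conj b` we have `‖x + y‖² = ‖x‖² + ‖y‖² + 2 Re (a b e^{iσ})`.
The triangle inequality gives the upper bound; conversely, whenever `Re (a b e^{iσ}) ≥ 0`,
`(‖x‖ + ‖y‖)² ≤ 2 (‖x‖² + ‖y‖²) ≤ 2 ‖x + y‖²`. For the lower bound it therefore suffices to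
find one `σ` with `Re (z₀ z₃ e^{iσ}) ≥ 0` and `Re (z₁ z₂ e^{iσ}) ≥ 0`: each condition holds
on a closed half-circle of angles, and two closed half-circles always meet.
-/

open Complex Real

noncomputable def Xfun (z : Fin 4 → ℂ) (σ : ℝ) : ℝ :=
  ‖z 0 * Complex.exp (σ * Complex.I) + (starRingEnd ℂ) (z 3)‖ +
  ‖z 1 * Complex.exp (σ * Complex.I) + (starRingEnd ℂ) (z 2)‖

noncomputable def Xnorm (z : Fin 4 → ℂ) : ℝ := ⨆ σ : ℝ, Xfun z σ

noncomputable def phase (z : Fin 4 → ℂ) : ℝ :=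
  (Complex.arg (z 0) + Complex.arg (z 3)) - (Complex.arg (z 1) + Complex.arg (z 2))

open ComplexConjugate

theorem norm_add_norm_le_sqrt_two_mul_norm_add {F : Type*} [NormedAddCommGroup F]
    [InnerProductSpace ℝ F] {x y : F} (hxy : 0 ≤ inner ℝ x y) :
    ‖x‖ + ‖y‖ ≤ √2 * ‖x + y‖ := by
  have hsq : (‖x‖ + ‖y‖) ^ 2 ≤ (√2 * ‖x + y‖) ^ 2 := by
    rw [mul_pow, sq_sqrt zero_le_two, norm_add_sq_real]
    nlinarith [sq_nonneg (‖x‖ - ‖y‖)]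
  exact (pow_le_pow_iff_left₀ (by positivity) (by positivity) two_ne_zero).mp hsq

theorem Real.exists_cos_add_nonneg_and_cos_add_nonneg (c₁ c₂ : ℝ) :
    ∃ σ : ℝ, 0 ≤ Real.cos (σ + c₁) ∧ 0 ≤ Real.cos (σ + c₂) := by
  set k := round ((c₂ - c₁) / (2 * π))
  set d := c₂ - c₁ - k * (2 * π)
  have hd : |d| ≤ π := by
    have h := abs_sub_round ((c₂ - c₁) / (2 * π))
    have hd' : d = ((c₂ - c₁) / (2 * π) - k) * (2 * π) := by
      field_simp
      ring
    rw [hd', abs_mul, abs_of_pos two_pi_pos]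
    nlinarith [pi_pos]
  have hcos : 0 ≤ Real.cos (d / 2) := by
    obtain ⟨h₁, h₂⟩ := abs_le.mp hd
    exact cos_nonneg_of_neg_pi_div_two_le_of_le (by linarith) (by linarith)
  refine ⟨-c₁ - d / 2, ?_, ?_⟩
  · rwa [show -c₁ - d / 2 + c₁ = -(d / 2) by ring, cos_neg]
  · rwa [show -c₁ - d / 2 + c₂ = d / 2 + k * (2 * π) by ring, cos_add_int_mul_two_pi]

theorem Complex.re_mul_exp_ofReal_mul_I (w : ℂ) (σ : ℝ) :
    (w * exp (σ * I)).re = ‖w‖ * Real.cos (σ + arg w) := by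
  conv_lhs => rw [← norm_mul_exp_arg_mul_I w, mul_assoc, ← exp_add, ← add_mul]
  rw [← ofReal_add, re_ofReal_mul, exp_ofReal_mul_I_re, add_comm]

theorem Complex.exists_re_mul_exp_nonneg (w₁ w₂ : ℂ) :
    ∃ σ : ℝ, 0 ≤ (w₁ * exp (σ * I)).re ∧ 0 ≤ (w₂ * exp (σ * I)).re := by
  obtain ⟨σ, h₁, h₂⟩ := Real.exists_cos_add_nonneg_and_cos_add_nonneg (arg w₁) (arg w₂)
  refine ⟨σ, ?_, ?_⟩ <;> rw [re_mul_exp_ofReal_mul_I] <;> positivity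

theorem Complex.norm_mul_exp_add_conj_le (a b : ℂ) (σ : ℝ) :
    ‖a * exp (σ * I) + conj b‖ ≤ ‖a‖ + ‖b‖ := by
  simpa [norm_exp_ofReal_mul_I] using norm_add_le (a * exp (σ * I)) (conj b)

theorem Complex.norm_add_norm_le_sqrt_two_mul (a b : ℂ) {σ : ℝ}
    (h : 0 ≤ (a * b * exp (σ * I)).re) :
    ‖a‖ + ‖b‖ ≤ √2 * ‖a * exp (σ * I) + conj b‖ := by
  have hinner : inner ℝ (a * exp (σ * I)) (conj b) = (a * b * exp (σ * I)).re := by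
    rw [Complex.inner, ← map_mul, conj_re]
    congr 1
    ring
  have := norm_add_norm_le_sqrt_two_mul_norm_add (hinner ▸ h)
  rwa [norm_mul, norm_exp_ofReal_mul_I, mul_one, RCLike.norm_conj] at this

theorem Xfun_le (z : Fin 4 → ℂ) (σ : ℝ) : Xfun z σ ≤ ∑ i, ‖z i‖ := by
  rw [Fin.sum_univ_four, Xfun]
  linarith [norm_mul_exp_add_conj_le (z 0) (z 3) σ, norm_mul_exp_add_conj_le (z 1) (z 2) σ]

theorem exists_sum_le_sqrt_two_mul_Xfun (z : Fin 4 → ℂ) :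
    ∃ σ : ℝ, ∑ i, ‖z i‖ ≤ √2 * Xfun z σ := by
  obtain ⟨σ, h₀₃, h₁₂⟩ := exists_re_mul_exp_nonneg (z 0 * z 3) (z 1 * z 2)
  refine ⟨σ, ?_⟩
  rw [Fin.sum_univ_four, Xfun, mul_add]
  linarith [norm_add_norm_le_sqrt_two_mul (z 0) (z 3) h₀₃,
    norm_add_norm_le_sqrt_two_mul (z 1) (z 2) h₁₂]

theorem stmt_18 (z : Fin 4 → ℂ) :
    (1 / Real.sqrt 2) * (∑ i : Fin 4, ‖z i‖) ≤ Xnorm z ∧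
    Xnorm z ≤ ∑ i : Fin 4, ‖z i‖ := by
  have hbdd : BddAbove (Set.range (Xfun z)) := ⟨_, Set.forall_mem_range.mpr (Xfun_le z)⟩
  obtain ⟨σ, hσ⟩ := exists_sum_le_sqrt_two_mul_Xfun z
  refine ⟨?_, ciSup_le (Xfun_le z)⟩
  calc 1 / √2 * ∑ i, ‖z i‖ ≤ Xfun z σ := by
        rw [one_div_mul_eq_div, div_le_iff₀' (by positivity)]
        exact hσ
    _ ≤ Xnorm z := le_ciSup hbdd σ
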